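/- Let Y = X ∪ α ⊂ ℝ², where X = ⋃_{n≥2} C_n is the union of the triangle boundaries C_n with vertices (0,0), (1/n,1), (1/n,1) + 10^{-10n}(n,−1), and α is the segment from (0,0) to (0,1). Then Y is a compact, path connected metric space that is not locally path connected (it fails to be locally path connected at points of α other than (0,0)). -/

import Mathlib

open unitInterval Topology

noncomputable section

/-- The topological fundamental group: path components of the based loop space
(compact-open topology), with the quotient topology. -/
def piTop (Z : Type*) [TopologicalSpace Z] (z : Z) : Type _ :=
  Quotient (pathSetoid (Path z z))

instance (Z : Type*) [TopologicalSpace Z] (z : Z) : TopologicalSpace (piTop Z z) :=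
  instTopologicalSpaceQuotient

/-- The class of a loop in the topological fundamental group. -/
def piMk {Z : Type*} [TopologicalSpace Z] {z : Z} (γ : Path z z) : piTop Z z :=
  Quotient.mk _ γ

/-- The common basepoint `p = (0,0)`. -/
def pp : ℝ × ℝ := (0, 0)

/-- The apex `(1/n, 1)` of the `n`-th triangle. -/
def apex (n : ℕ) : ℝ × ℝ := (1 / (n : ℝ), 1)

/-- The third vertex `(1/n,1) + 10^{-10n}·(n,-1)` of the `n`-th triangle. -/
def apex' (n : ℕ) : ℝ × ℝ := apex n + (((10 : ℝ) ^ (10 * n))⁻¹) • ((n : ℝ), -1)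

/-- The boundary of the `n`-th triangle, i.e. the union of its three edges. -/
def Cset (n : ℕ) : Set (ℝ × ℝ) :=
  segment ℝ pp (apex n) ∪ segment ℝ (apex n) (apex' n) ∪ segment ℝ (apex' n) pp

/-- The bouquet `X = ⋃_{n ≥ 2} C_n`. -/
def Xset : Set (ℝ × ℝ) := ⋃ n ∈ {n : ℕ | 2 ≤ n}, Cset n

/-- The segment `α` from `(0,0)` to `(0,1)`. -/
def alphaSet : Set (ℝ × ℝ) := segment ℝ (0, 0) (0, 1)

/-- The compactification `Y = X ∪ α`. -/
def Yset : Set (ℝ × ℝ) := Xset ∪ alphaSet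

lemma pp_mem_C (n : ℕ) : pp ∈ Cset n := Or.inl (Or.inl (left_mem_segment ℝ _ _))

lemma pp_mem_X : pp ∈ Xset :=
  Set.mem_biUnion (by norm_num : (2 : ℕ) ∈ {n : ℕ | 2 ≤ n}) (pp_mem_C 2)

lemma X_sub_Y : Xset ⊆ Yset := Set.subset_union_left

lemma pp_mem_Y : pp ∈ Yset := X_sub_Y pp_mem_X

/-- The basepoint of `X`. -/
def pX : ↥Xset := ⟨pp, pp_mem_X⟩

/-- The basepoint of `Y`. -/
def pY : ↥Yset := ⟨pp, pp_mem_Y⟩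

/-- The inclusion `X ↪ Y` as a continuous map between subspaces. -/
def jXY : C(↥Xset, ↥Yset) := ⟨Set.inclusion X_sub_Y, continuous_inclusion X_sub_Y⟩

lemma jXY_pX : jXY pX = pY := rfl

/-! The triangle `C n` lies within `2/n` of `α`, so the `C n` accumulate only on `α` and `Y` is
closed; being bounded it is compact, and it is path connected as a union of path-connected sets
through `(0,0)`. Each `C n` lies in a thin wedge at the origin, between the rays through `apex' n`
and `apex n`, and since `10^{-10n}` is tiny these wedges meet each other and `α` only at the origin.
Hence a preconnected subset of `Y \ {(0,0)}` that meets `α` lies in `α`. But every neighbourhood of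
a point `(0,t)`, `t > 0`, contains the points `(t/n, t)` of `C n` for large `n`, so no
neighbourhood of it inside `Y \ {(0,0)}` is path connected. -/

open Metric Filter

theorem IsClosed.union_iUnion_of_subset_cthickening {ι X : Type*} [PseudoMetricSpace X]
    {A : Set X} {s : ι → Set X} {r : ι → ℝ} (hA : IsClosed A) (hs : ∀ i, IsClosed (s i))
    (hr : Tendsto r cofinite (𝓝 0)) (hsr : ∀ i, s i ⊆ cthickening (r i) A) :
    IsClosed (A ∪ ⋃ i, s i) := by
  refine isOpen_compl_iff.mp (isOpen_iff_mem_nhds.mpr fun x hx => ?_)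
  simp only [Set.mem_compl_iff, Set.mem_union, Set.mem_iUnion, not_or, not_exists] at hx
  obtain ⟨ε, hε, hball⟩ := Metric.mem_nhds_iff.mp (hA.isOpen_compl.mem_nhds hx.1)
  have hfin : {i | ¬ r i < ε / 2}.Finite :=
    eventually_cofinite.mp (hr.eventually (gt_mem_nhds (half_pos hε)))
  -- a point of `ball x (ε/2)` within `ε/2` of `A` would put `x` within `ε` of `A`
  have hfar : ∀ i, r i < ε / 2 → Disjoint (ball x (ε / 2)) (s i) := by
    refine fun i hi => Set.disjoint_left.mpr fun y hy hys => ?_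
    have hxA : x ∈ thickening ε A := by
      have := thickening_cthickening_subset (ε / 2) (half_pos hε).le A
        (mem_thickening_iff.mpr ⟨y, cthickening_mono hi.le A (hsr i hys), mem_ball'.mp hy⟩)
      rwa [add_halves] at this
    obtain ⟨z, hzA, hxz⟩ := mem_thickening_iff.mp hxA
    exact hball (mem_ball'.mpr hxz) hzA
  refine mem_of_superset (inter_mem (ball_mem_nhds x (half_pos hε))
    ((biInter_mem hfin).mpr fun i _ => (hs i).isOpen_compl.mem_nhds (hx.2 i)))
    fun y ⟨hy, hyF⟩ => ?_
  simp only [Set.mem_compl_iff, Set.mem_union, Set.mem_iUnion, not_or, not_exists]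
  refine ⟨fun hyA => hball (ball_subset_ball (by linarith) hy) hyA, fun i hyi => ?_⟩
  by_cases hi : r i < ε / 2
  · exact Set.disjoint_left.mp (hfar i hi) hy hyi
  · exact Set.mem_iInter₂.mp hyF i hi hyi

def eps (n : ℕ) : ℝ := ((10 : ℝ) ^ (10 * n))⁻¹

lemma eps_pos (n : ℕ) : 0 < eps n := by unfold eps; positivity

lemma eps_le_one (n : ℕ) : eps n ≤ 1 := inv_le_one_of_one_le₀ (one_le_pow₀ (by norm_num))

lemma cube_mul_eps_lt_one (n : ℕ) : (n : ℝ) ^ 3 * eps n < 1 := by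
  have h : n ^ 3 < 10 ^ (10 * n) :=
    calc n ^ 3 < (2 ^ n) ^ 3 := Nat.pow_lt_pow_left Nat.lt_two_pow_self (by norm_num)
      _ = 2 ^ (n * 3) := by rw [← pow_mul]
      _ ≤ 10 ^ (n * 3) := Nat.pow_le_pow_left (by norm_num) _
      _ ≤ 10 ^ (10 * n) := Nat.pow_le_pow_right (by norm_num) (by omega)
  rw [eps, mul_inv_lt_iff₀ (by positivity), one_mul]
  exact_mod_cast h

lemma mul_eps_le_inv (n : ℕ) : n * eps n ≤ 1 / n := by
  rcases Nat.eq_zero_or_pos n with rfl | hn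
  · simp
  have hn' : (1 : ℝ) ≤ n := by exact_mod_cast hn
  rw [le_div_iff₀ (by positivity)]
  nlinarith [cube_mul_eps_lt_one n, eps_pos n]

lemma apex'_eq (n : ℕ) : apex' n = (1 / n + n * eps n, 1 - eps n) := by
  simp only [apex', apex, eps, Prod.ext_iff, Prod.fst_add, Prod.snd_add, Prod.smul_fst,
    Prod.smul_snd, smul_eq_mul]
  constructor <;> ring

lemma mem_alphaSet_iff {q : ℝ × ℝ} : q ∈ alphaSet ↔ q.1 = 0 ∧ 0 ≤ q.2 ∧ q.2 ≤ 1 := by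
  rw [alphaSet, segment_eq_image]
  constructor
  · rintro ⟨θ, ⟨h0, h1⟩, rfl⟩
    simp [h0, h1]
  · rintro ⟨h1, h2, h3⟩
    exact ⟨q.2, ⟨h2, h3⟩, Prod.ext (by simp [h1]) (by simp)⟩

lemma isCompact_segment {E : Type*} [NormedAddCommGroup E] [NormedSpace ℝ E] (x y : E) :
    IsCompact (segment ℝ x y) := by
  rw [← convexHull_pair (𝕜 := ℝ)]
  exact (Set.toFinite _).isCompact_convexHull ℝ

lemma isCompact_alphaSet : IsCompact alphaSet := isCompact_segment _ _

lemma Cset_subset_convexHull (n : ℕ) : Cset n ⊆ convexHull ℝ {pp, apex n, apex' n} := by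
  refine Set.union_subset (Set.union_subset ?_ ?_) ?_ <;>
    exact segment_subset_convexHull (by simp) (by simp)

lemma Cset_subset_of_convex {s : Set (ℝ × ℝ)} (hs : Convex ℝ s) {n : ℕ} (hpp : pp ∈ s)
    (hapex : apex n ∈ s) (hapex' : apex' n ∈ s) : Cset n ⊆ s :=
  (Cset_subset_convexHull n).trans
    (convexHull_min (Set.insert_subset hpp (Set.insert_subset hapex
      (Set.singleton_subset_iff.mpr hapex'))) hs)

lemma Cset_subset_cthickening (n : ℕ) : Cset n ⊆ cthickening (2 / n) alphaSet := by
  have h1 : 1 / (n : ℝ) ≤ 2 / n := by gcongr; norm_num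
  have hdist : ∀ q w : ℝ × ℝ, w ∈ alphaSet → |q.1 - w.1| ≤ 2 / n → q.2 = w.2 →
      q ∈ cthickening (2 / n) alphaSet := fun q w hw h1 h2 =>
    mem_cthickening_of_dist_le q w _ _ hw (by simpa [Prod.dist_eq, Real.dist_eq, h2] using h1)
  refine Cset_subset_of_convex ((convex_segment _ _).cthickening _)
    (self_subset_cthickening _ (left_mem_segment ℝ _ _)) ?_ ?_
  · exact hdist _ (0, 1) (right_mem_segment ℝ _ _) (by simpa [apex] using h1) rfl
  · refine hdist _ (0, 1 - eps n) (mem_alphaSet_iff.mpr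
      ⟨rfl, by linarith [eps_le_one n], by linarith [eps_pos n]⟩) ?_ (by rw [apex'_eq])
    rw [apex'_eq]
    change |1 / (n : ℝ) + n * eps n - 0| ≤ _
    rw [sub_zero, abs_of_nonneg (by have := eps_pos n; positivity)]
    linarith [mul_eps_le_inv n, (by ring : (2 : ℝ) / n = 1 / n + 1 / n)]

lemma isCompact_Cset (n : ℕ) : IsCompact (Cset n) :=
  ((isCompact_segment _ _).union (isCompact_segment _ _)).union (isCompact_segment _ _)

lemma isClosed_alphaSet_union_biUnion_Cset (S : Set ℕ) :
    IsClosed (alphaSet ∪ ⋃ n ∈ S, Cset n) := by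
  rw [Set.biUnion_eq_iUnion]
  refine isCompact_alphaSet.isClosed.union_iUnion_of_subset_cthickening
    (fun n => (isCompact_Cset n).isClosed) ?_ fun n => Cset_subset_cthickening n
  have hval : Tendsto (fun n : S => (n : ℕ)) cofinite atTop :=
    Nat.cofinite_eq_atTop ▸ Subtype.val_injective.tendsto_cofinite
  exact (tendsto_const_div_atTop_nhds_zero_nat 2).comp hval

lemma isCompact_Yset : IsCompact Yset := by
  have hclosed : IsClosed Yset := by
    rw [Yset, Set.union_comm]
    exact isClosed_alphaSet_union_biUnion_Cset _
  refine (isCompact_alphaSet.cthickening (r := 1)).of_isClosed_subset hclosed ?_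
  rintro q (hq | hq)
  · obtain ⟨n, hn, hqn⟩ := Set.mem_iUnion₂.mp hq
    have hn' : (2 : ℝ) ≤ n := by exact_mod_cast hn
    exact cthickening_mono ((div_le_one (by linarith)).mpr hn') _ (Cset_subset_cthickening n hqn)
  · exact self_subset_cthickening _ hq

lemma isPathConnected_Cset (n : ℕ) : IsPathConnected (Cset n) := by
  have hseg (x y : ℝ × ℝ) : IsPathConnected (segment ℝ x y) :=
    (convex_segment x y).isPathConnected ⟨x, left_mem_segment ℝ x y⟩
  refine ((hseg _ _).union (hseg _ _) ⟨apex n, right_mem_segment ℝ _ _, left_mem_segment ℝ _ _⟩)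
    |>.union (hseg _ _) ⟨apex' n, Or.inr (right_mem_segment ℝ _ _), left_mem_segment ℝ _ _⟩

lemma isPathConnected_Yset : IsPathConnected Yset := by
  refine ⟨pp, pp_mem_Y, fun {q} hq => ?_⟩
  rcases hq with hq | hq
  · obtain ⟨n, hn, hqn⟩ := Set.mem_iUnion₂.mp hq
    exact ((isPathConnected_Cset n).joinedIn pp (pp_mem_C n) q hqn).mono
      ((Set.subset_biUnion_of_mem hn).trans X_sub_Y)
  · exact (((convex_segment _ _).isPathConnected ⟨pp, left_mem_segment ℝ _ _⟩).joinedIn pp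
      (left_mem_segment ℝ _ _) q hq).mono Set.subset_union_right

def wedge (a b : ℝ) : Set (ℝ × ℝ) := {q | 0 ≤ q.1 ∧ a * q.1 ≤ q.2 ∧ q.2 ≤ b * q.1}

lemma convex_wedge (a b : ℝ) : Convex ℝ (wedge a b) := by
  rintro q ⟨hq0, hqa, hqb⟩ r ⟨hr0, hra, hrb⟩ s t hs ht -
  simp only [wedge, Set.mem_ofPred_eq, Prod.fst_add, Prod.snd_add, Prod.smul_fst, Prod.smul_snd,
    smul_eq_mul]
  refine ⟨by positivity, by nlinarith, by nlinarith⟩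

lemma eq_pp_of_mem_wedge {a b : ℝ} {q : ℝ × ℝ} (hq : q ∈ wedge a b) (hq1 : q.1 = 0) : q = pp := by
  obtain ⟨-, ha, hb⟩ := hq
  rw [hq1, mul_zero] at ha hb
  exact Prod.ext hq1 (le_antisymm hb ha)

lemma wedge_inter_wedge_subset {a b a' b' : ℝ} (h : b < a') : wedge a b ∩ wedge a' b' ⊆ {pp} :=
  fun q ⟨⟨hq0, _, hqb⟩, _, hqa', _⟩ =>
    eq_pp_of_mem_wedge ⟨hq0, ‹_›, hqb⟩ (le_antisymm (by nlinarith) hq0)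

/-- The slope of the ray from `pp` through `apex' n`. -/
def lowerSlope (n : ℕ) : ℝ := (1 - eps n) / (1 / n + n * eps n)

lemma Cset_subset_wedge {n : ℕ} (hn : n ≠ 0) : Cset n ⊆ wedge (lowerSlope n) n := by
  have hn' : (0 : ℝ) < n := by positivity
  have he := eps_pos n
  have hden : 0 < 1 / (n : ℝ) + n * eps n := by positivity
  have hslope : lowerSlope n ≤ n := by
    rw [lowerSlope, div_le_iff₀ hden, mul_add, mul_one_div_cancel hn'.ne']
    nlinarith [mul_pos hn' (mul_pos hn' he)]
  refine Cset_subset_of_convex (convex_wedge _ _) (by simp [wedge, pp]) ⟨?_, ?_, ?_⟩ ?_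
  · change (0 : ℝ) ≤ 1 / n
    positivity
  · calc lowerSlope n * (1 / n) ≤ n * (1 / n) := by gcongr
      _ = 1 := mul_one_div_cancel hn'.ne'
  · exact (mul_one_div_cancel hn'.ne').ge
  · rw [apex'_eq]
    refine ⟨hden.le, (div_mul_cancel₀ _ hden.ne').le, ?_⟩
    change 1 - eps n ≤ n * (1 / n + n * eps n)
    rw [mul_add, mul_one_div_cancel hn'.ne']
    nlinarith [mul_pos hn' (mul_pos hn' he)]

lemma sub_one_lt_lowerSlope {n : ℕ} (hn : n ≠ 0) : (n : ℝ) - 1 < lowerSlope n := by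
  have hn' : (1 : ℝ) ≤ n := by exact_mod_cast Nat.one_le_iff_ne_zero.mpr hn
  have he := eps_pos n
  have hsmall : (n ^ 2 - n + 1) * eps n < 1 / n := by
    rw [lt_div_iff₀ (by positivity)]
    nlinarith [cube_mul_eps_lt_one n, mul_nonneg (mul_nonneg (by positivity : (0 : ℝ) ≤ n)
      (by linarith : (0 : ℝ) ≤ n - 1)) he.le]
  have hexpand : ((n : ℝ) - 1) * (1 / n + n * eps n) = 1 - 1 / n + (n ^ 2 - n) * eps n := by
    field_simp
  rw [lowerSlope, lt_div_iff₀ (by positivity), hexpand]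
  linarith

lemma Cset_inter_Cset_subset {n m : ℕ} (hn : n ≠ 0) (hm : m ≠ 0) (hnm : n ≠ m) :
    Cset n ∩ Cset m ⊆ {pp} := by
  wlog hlt : n < m generalizing n m
  · rw [Set.inter_comm]
    exact this hm hn hnm.symm (by omega)
  have hslope : (n : ℝ) < lowerSlope m := by
    have : (n : ℝ) ≤ m - 1 := by
      have := Nat.cast_le (α := ℝ) |>.mpr (Nat.succ_le_of_lt hlt)
      push_cast at this
      linarith
    linarith [sub_one_lt_lowerSlope hm]
  exact (Set.inter_subset_inter (Cset_subset_wedge hn) (Cset_subset_wedge hm)).trans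
    (wedge_inter_wedge_subset hslope)

lemma Cset_inter_alphaSet_subset {n : ℕ} (hn : n ≠ 0) : Cset n ∩ alphaSet ⊆ {pp} :=
  fun _ ⟨hqn, hqα⟩ => eq_pp_of_mem_wedge (Cset_subset_wedge hn hqn) (mem_alphaSet_iff.mp hqα).1

lemma subset_alphaSet_of_isPreconnected {K : Set (ℝ × ℝ)} (hK : IsPreconnected K)
    (hKY : K ⊆ Yset) (hpp : pp ∉ K) (hKα : (K ∩ alphaSet).Nonempty) : K ⊆ alphaSet := by
  intro q hqK
  by_contra hqα
  obtain ⟨n, hn, hqn⟩ : ∃ n, 2 ≤ n ∧ q ∈ Cset n := by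
    simpa [Yset, Xset, hqα] using hKY hqK
  have hn0 : n ≠ 0 := by omega
  have hKsplit : K ⊆ Cset n ∪ (alphaSet ∪ ⋃ m ∈ {m | 2 ≤ m} \ {n}, Cset m) := by
    intro w hw
    rcases hKY hw with hwX | hwα
    · obtain ⟨m, hm, hwm⟩ := Set.mem_iUnion₂.mp hwX
      by_cases hmn : m = n
      · exact Or.inl (hmn ▸ hwm)
      · exact Or.inr (Or.inr (Set.mem_biUnion ⟨hm, hmn⟩ hwm))
    · exact Or.inr (Or.inl hwα)
  obtain ⟨w, hwK, hwn, hwR⟩ := isPreconnected_closed_iff.mp hK _ _ (isCompact_Cset n).isClosed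
    (isClosed_alphaSet_union_biUnion_Cset _) hKsplit ⟨q, hqK, hqn⟩
    (hKα.mono (Set.inter_subset_inter_right _ Set.subset_union_left))
  have hw : w ∈ ({pp} : Set (ℝ × ℝ)) := by
    rcases hwR with hwα | hwm
    · exact Cset_inter_alphaSet_subset hn0 ⟨hwn, hwα⟩
    · obtain ⟨m, ⟨hm, hmn⟩, hwm⟩ := Set.mem_iUnion₂.mp hwm
      exact Cset_inter_Cset_subset hn0 (Nat.ne_zero_of_lt hm) (Ne.symm hmn) ⟨hwn, hwm⟩
  exact hpp (Set.mem_singleton_iff.mp hw ▸ hwK)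

lemma mem_closure_Yset_diff_alphaSet {y : ℝ × ℝ} (hyα : y ∈ alphaSet) (hy0 : y ≠ pp) :
    y ∈ closure (Yset \ alphaSet) := by
  obtain ⟨hy1, hy2, hy3⟩ := mem_alphaSet_iff.mp hyα
  have ht : 0 < y.2 := hy2.lt_of_ne fun h => hy0 (Prod.ext hy1 h.symm)
  -- the points `y.2 • apex n` of the edge from `pp` to `apex n` converge to `y`
  have hlim : Tendsto (fun n : ℕ => ((y.2 / n, y.2) : ℝ × ℝ)) atTop (𝓝 y) := by
    rw [← Prod.mk.eta (p := y), hy1]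
    exact (tendsto_const_div_atTop_nhds_zero_nat _).prodMk_nhds tendsto_const_nhds
  refine mem_closure_of_tendsto hlim ((eventually_ge_atTop 2).mono fun n hn => ⟨?_, ?_⟩)
  · refine X_sub_Y (Set.mem_biUnion hn (Or.inl (Or.inl ⟨1 - y.2, y.2, by linarith, hy2,
      by ring, ?_⟩)))
    simp [pp, apex, div_eq_mul_inv]
  · have hn' : (0 : ℝ) < n := by exact_mod_cast (by omega : 0 < n)
    exact fun h => (div_pos ht hn').ne' (mem_alphaSet_iff.mp h).1

lemma not_forall_nhds_isPathConnected {y : ↥Yset} (hyα : (y : ℝ × ℝ) ∈ alphaSet)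
    (hy0 : (y : ℝ × ℝ) ≠ pp) : ¬ ∀ U ∈ 𝓝 y, ∃ V ∈ 𝓝 y, V ⊆ U ∧ IsPathConnected V := by
  intro h
  obtain ⟨V, hV, hVpp, hVpc⟩ := h {z | (z : ℝ × ℝ) ≠ pp}
    ((isOpen_ne_fun continuous_subtype_val continuous_const).mem_nhds hy0)
  have hKα : Subtype.val '' V ⊆ alphaSet :=
    subset_alphaSet_of_isPreconnected
      (hVpc.image continuous_subtype_val).isConnected.isPreconnected
      (by rintro _ ⟨z, -, rfl⟩; exact z.2) (fun ⟨z, hz, hzpp⟩ => hVpp hz hzpp)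
      ⟨y, ⟨y, mem_of_mem_nhds hV, rfl⟩, hyα⟩
  obtain ⟨W, hW, hWV⟩ := (mem_nhds_subtype _ _ _).mp hV
  obtain ⟨z, hzW, hzY, hzα⟩ :=
    mem_closure_iff_nhds.mp (mem_closure_Yset_diff_alphaSet hyα hy0) W hW
  exact hzα (hKα ⟨⟨z, hzY⟩, hWV hzW, rfl⟩)

/-- `Y = X ∪ α` is compact and path connected, but not locally path
connected; indeed local path connectedness fails at every point of `α` other
than `(0,0)`. -/
theorem Yset_compact_pathConnected_not_locPathConnected :
    IsCompact Yset ∧ IsPathConnected Yset ∧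
    ¬ LocPathConnectedSpace ↥Yset ∧
    ∀ y : ↥Yset, (y : ℝ × ℝ) ∈ alphaSet → (y : ℝ × ℝ) ≠ (0, 0) →
      ¬ (∀ U ∈ 𝓝 y, ∃ V ∈ 𝓝 y, V ⊆ U ∧ IsPathConnected V) := by
  refine ⟨isCompact_Yset, isPathConnected_Yset, fun hlpc => ?_,
    fun y => not_forall_nhds_isPathConnected⟩
  have hα : ((0 : ℝ), (1 : ℝ)) ∈ alphaSet := right_mem_segment ℝ _ _
  refine not_forall_nhds_isPathConnected (y := ⟨(0, 1), Or.inr hα⟩) hα (by simp [pp])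
    fun U hU => ?_
  obtain ⟨V, ⟨hV, hVpc⟩, hVU⟩ := (@path_connected_basis _ _ hlpc _).mem_iff.mp hU
  exact ⟨V, hV, hVU, hVpc⟩
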